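/- arXiv:1608.04813 — 2 statements merged into one kernel-verified Lean document; each statement's English description precedes it below -/
import Mathlib

section
/- Let X₁,...,X_λ be i.i.d. random variables with continuous c.d.f. F (of the function values f(Xᵢ)). Define the weight function W(i) = Σ_{k=l_i+1}^{u_i} w_k/(u_i - l_i), where l_i = #{j : f(X_j) < f(X_i)} and u_i = #{j : f(X_j) ≤ f(X_i)}. Then the conditional expectation satisfies E[W(i) | X_i] = Σ_{k=1}^{λ} w_k · C(λ-1, k-1) · F(f(X_i))^{k-1} (1 - F(f(X_i)))^{λ-k} almost surely. -/
/-!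
Conditionally on `X i = x`, the other `λ - 1` points are i.i.d. with law `ν` and independent of
`X i`, so the conditional expectation of a function of `(X i, others)` is the integral of that
function against the product law with `x` frozen. Continuity of `F` makes `ν {f = f x}` null:
almost surely there are no ties with `x`, so the weight collapses to `w (l + 1)`, where the
number `l` of strictly better points is binomial with parameters `λ - 1` and
`ν {f < f x} = F (f x)`.
-/

open MeasureTheory ProbabilityTheory Finset

lemma nullSingletonClass_of_continuous_cdf {ρ : Measure ℝ} [IsProbabilityMeasure ρ]
    (h : Continuous (cdf ρ)) : NullSingletonClass ρ :=
  ⟨fun t => by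
    rw [← measure_cdf ρ, StieltjesFunction.measure_singleton,
      h.continuousWithinAt.leftLim_eq, sub_self, ENNReal.ofReal_zero]⟩

lemma ae_eq_setOf_lt_setOf_le_of_continuous_cdf {E : Type*} [MeasurableSpace E]
    {ν : Measure E} [IsProbabilityMeasure ν] {f : E → ℝ} (hf : Measurable f)
    (hc : Continuous (cdf (ν.map f))) (t : ℝ) : {y | f y < t} =ᵐ[ν] {y | f y ≤ t} :=
  have := Measure.isProbabilityMeasure_map (μ := ν) hf.aemeasurable
  have := nullSingletonClass_of_continuous_cdf hc
  ae_of_ae_map hf.aemeasurable (Iio_ae_eq_Iic (μ := ν.map f))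

/-- A variant of `condExp_prod_ae_eq_integral_condDistrib` for a product joint law, with no
standard Borel assumption on the codomain of `Y`. -/
theorem condExp_comp_prodMk_ae_eq_integral {Ω E G F : Type*} {mΩ : MeasurableSpace Ω}
    {mE : MeasurableSpace E} [MeasurableSpace G] [NormedAddCommGroup F] [NormedSpace ℝ F]
    [CompleteSpace F] {μ : Measure Ω} [IsFiniteMeasure μ] {ν : Measure E} {π : Measure G}
    [SFinite ν] [IsProbabilityMeasure π] {X : Ω → E} {Y : Ω → G} (hX : Measurable X)
    (hY : Measurable Y) (hXY : μ.map (fun ω => (X ω, Y ω)) = ν.prod π) {φ : E × G → F}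
    (hφ : StronglyMeasurable φ) (hint : Integrable (fun ω => φ (X ω, Y ω)) μ) :
    μ[fun ω => φ (X ω, Y ω) | mE.comap X] =ᵐ[μ] fun ω => ∫ y, φ (X ω, y) ∂π := by
  have hXYm : AEMeasurable (fun ω => (X ω, Y ω)) μ := (hX.prodMk hY).aemeasurable
  have hφint : Integrable φ (ν.prod π) := by
    rwa [← hXY, integrable_map_measure hφ.aestronglyMeasurable hXYm]
  have hgint : Integrable (fun p : E × G => ∫ y, φ (p.1, y) ∂π) (ν.prod π) :=
    hφint.integral_prod_left.comp_fst π
  have hsetIntegral {ψ : E × G → F} (hψ : Integrable ψ (ν.prod π)) {t : Set E}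
      (ht : MeasurableSet t) :
      ∫ ω in X ⁻¹' t, ψ (X ω, Y ω) ∂μ = ∫ x in t, ∫ y, ψ (x, y) ∂π ∂ν := by
    rw [← Measure.restrict_univ (μ := π), ← setIntegral_prod _ hψ.integrableOn, ← hXY,
      setIntegral_map (ht.prod .univ) (hXY ▸ hψ.aestronglyMeasurable) hXYm,
      Set.mk_preimage_prod, Set.preimage_univ, Set.inter_univ]
  refine (ae_eq_condExp_of_forall_setIntegral_eq hX.comap_le hint
    (fun s _ _ => ?_) ?_ ?_).symm
  · rw [← hXY] at hgint
    exact ((integrable_map_measure hgint.aestronglyMeasurable hXYm).mp hgint).integrableOn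
  · rintro s ⟨t, ht, rfl⟩ _
    rw [hsetIntegral hgint ht, hsetIntegral hφint ht]
    simp
  · exact (hφ.integral_prod_right'.comp_measurable
      (Measurable.of_comap_le le_rfl)).aestronglyMeasurable

section CountInProduct

variable {ι E : Type*} [Fintype ι] [DecidableEq ι]

lemma setOf_filter_mem_eq_pi {B : Set E} [DecidablePred (· ∈ B)] (S : Finset ι) :
    {v : ι → E | ({j | v j ∈ B} : Finset ι) = S} =
      Set.univ.pi fun j => if j ∈ S then B else Bᶜ := by
  ext v
  simp only [Set.mem_ofPred_eq, Set.mem_pi, Set.mem_univ, true_implies, Finset.ext_iff,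
    mem_filter, mem_univ, true_and]
  refine forall_congr' fun j => ?_
  split_ifs with hj <;> simp [hj]

variable [MeasurableSpace E]

lemma measurableSet_filter_mem_eq {B : Set E} (hB : MeasurableSet B) [DecidablePred (· ∈ B)]
    (S : Finset ι) : MeasurableSet {v : ι → E | ({j | v j ∈ B} : Finset ι) = S} := by
  rw [setOf_filter_mem_eq_pi]
  exact .univ_pi fun j => by split_ifs; exacts [hB, hB.compl]

lemma measureReal_pi_filter_mem_eq (ν : Measure E) [IsProbabilityMeasure ν] {B : Set E}
    (hB : MeasurableSet B) [DecidablePred (· ∈ B)] (S : Finset ι) :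
    (Measure.pi fun _ : ι => ν).real {v | ({j | v j ∈ B} : Finset ι) = S} =
      ν.real B ^ #S * (1 - ν.real B) ^ (Fintype.card ι - #S) := by
  simp_rw [setOf_filter_mem_eq_pi, measureReal_def, Measure.pi_pi, ENNReal.toReal_prod,
    apply_ite, ← measureReal_def]
  rw [prod_ite, prod_const, prod_const, measureReal_compl hB, probReal_univ, filter_mem_eq_inter,
    univ_inter, filter_not, card_sdiff, filter_mem_eq_inter, univ_inter, card_univ, inter_univ]

omit [DecidableEq ι] in
lemma integral_comp_card_filter_mem_pi (ν : Measure E) [IsProbabilityMeasure ν] {B : Set E}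
    (hB : MeasurableSet B) [DecidablePred (· ∈ B)] (h : ℕ → ℝ) :
    ∫ v, h #{j | v j ∈ B} ∂(Measure.pi fun _ : ι => ν) =
      ∑ m ∈ range (Fintype.card ι + 1),
        h m * (Fintype.card ι).choose m * ν.real B ^ m * (1 - ν.real B) ^ (Fintype.card ι - m) := by
  classical
  have hsplit : (fun v : ι → E => h #{j | v j ∈ B}) = fun v => ∑ S ∈ (univ : Finset ι).powerset,
      Set.indicator {v | ({j | v j ∈ B} : Finset ι) = S} (fun _ => h #S) v := by
    ext v
    rw [sum_eq_single_of_mem (s := univ.powerset) ({j | v j ∈ B} : Finset ι)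
      (mem_powerset.2 (subset_univ _))]
    · simp
    · intro S _ hS
      exact Set.indicator_of_notMem (Ne.symm hS) (fun _ => h #S)
  rw [hsplit, integral_finsetSum _ fun S _ =>
    (integrable_const _).indicator (measurableSet_filter_mem_eq hB S)]
  simp_rw [integral_indicator_const _ (measurableSet_filter_mem_eq hB _),
    measureReal_pi_filter_mem_eq ν hB, smul_eq_mul]
  rw [sum_powerset_apply_card
    (fun m => ν.real B ^ m * (1 - ν.real B) ^ (Fintype.card ι - m) * h m), card_univ]
  refine sum_congr rfl fun m _ => ?_
  rw [nsmul_eq_mul]; ring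

end CountInProduct

/-- The mean of `w` over the ranks `l + 1, …, u` shared by a group of tied points. -/
noncomputable def tieAverage (w : ℕ → ℝ) (l u : ℕ) : ℝ := (∑ k ∈ Ioc l u, w k) / ((u : ℝ) - l)

@[simp] lemma tieAverage_self_add_one (w : ℕ → ℝ) (l : ℕ) :
    tieAverage w l (l + 1) = w (l + 1) := by
  simp [tieAverage, Nat.Ioc_succ_singleton]

lemma abs_tieAverage_le (w : ℕ → ℝ) {l u N : ℕ} (hu : u ≤ N) :
    |tieAverage w l u| ≤ ∑ k ∈ Iic N, |w k| := by
  have hsum : ∑ k ∈ Ioc l u, |w k| ≤ ∑ k ∈ Iic N, |w k| :=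
    sum_le_sum_of_subset_of_nonneg (fun k hk => by rw [mem_Ioc] at hk; rw [mem_Iic]; omega)
      fun _ _ _ => abs_nonneg _
  rcases le_or_gt u l with hul | hlu
  · rw [tieAverage, Ioc_eq_empty_of_le hul, sum_empty, zero_div, abs_zero]
    exact sum_nonneg fun _ _ => abs_nonneg _
  · have hd : (1 : ℝ) ≤ (u : ℝ) - l := by
      have : ((l + 1 : ℕ) : ℝ) ≤ u := by exact_mod_cast hlu
      push_cast at this; linarith
    calc |tieAverage w l u| ≤ |∑ k ∈ Ioc l u, w k| := by
          rw [tieAverage, abs_div, abs_of_pos (by linarith : (0 : ℝ) < u - l)]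
          exact div_le_self (abs_nonneg _) hd
      _ ≤ ∑ k ∈ Ioc l u, |w k| := abs_sum_le_sum_abs _ _
      _ ≤ _ := hsum

lemma measurable_card_filter {α ι : Type*} [Fintype ι] [MeasurableSpace α] {p : α → ι → Prop}
    [∀ a j, Decidable (p a j)] (hp : ∀ j, MeasurableSet {a | p a j}) :
    Measurable fun a => #{j | p a j} := by
  simp_rw [card_filter]
  exact Finset.measurable_sum _ fun j _ => Measurable.ite (hp j) measurable_const measurable_const

section RankWeight

variable {ι E : Type*} [Fintype ι]

/-- The weight `W` of `x` ranked among itself and the points `v j`: the `+ 1` counts `x`. -/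
noncomputable def rankWeight (f : E → ℝ) (w : ℕ → ℝ) (x : E) (v : ι → E) : ℝ :=
  tieAverage w #{j | f (v j) < f x} (#{j | f (v j) ≤ f x} + 1)

lemma abs_rankWeight_le (f : E → ℝ) (w : ℕ → ℝ) (x : E) (v : ι → E) :
    |rankWeight f w x v| ≤ ∑ k ∈ Iic (Fintype.card ι + 1), |w k| :=
  abs_tieAverage_le w (Nat.add_le_add_right (card_le_univ (α := ι) _) 1)

variable [MeasurableSpace E]

lemma measurable_rankWeight {f : E → ℝ} (hf : Measurable f) (w : ℕ → ℝ) :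
    Measurable fun p : E × (ι → E) => rankWeight f w p.1 p.2 := by
  have hcoord (j : ι) : Measurable fun p : E × (ι → E) => f (p.2 j) :=
    hf.comp ((measurable_pi_apply j).comp measurable_snd)
  have hx : Measurable fun p : E × (ι → E) => f p.1 := hf.comp measurable_fst
  exact (measurable_of_countable fun lu : ℕ × ℕ => tieAverage w lu.1 lu.2).comp
    ((measurable_card_filter fun j => measurableSet_lt (hcoord j) hx).prodMk
      ((measurable_card_filter fun j => measurableSet_le (hcoord j) hx).add_const 1))

lemma integral_rankWeight_pi (ν : Measure E) [IsProbabilityMeasure ν] {f : E → ℝ}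
    (hf : Measurable f) (w : ℕ → ℝ) {x : E} (hx : {y | f y < f x} =ᵐ[ν] {y | f y ≤ f x}) :
    ∫ v, rankWeight f w x v ∂(Measure.pi fun _ : ι => ν) =
      ∑ k ∈ Icc 1 (Fintype.card ι + 1), w k * (Fintype.card ι).choose (k - 1) *
        ν.real {y | f y < f x} ^ (k - 1) *
          (1 - ν.real {y | f y < f x}) ^ (Fintype.card ι + 1 - k) := by
  have hnoTies : ∀ᵐ v ∂(Measure.pi fun _ : ι => ν),
      #{j : ι | f (v j) ≤ f x} = #{j : ι | f (v j) < f x} := by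
    have := ae_all_iff.2 fun j : ι => (Measure.tendsto_eval_ae_ae (i := j)).eventually hx
    filter_upwards [this] with v hv
    exact congrArg card (filter_congr fun j _ => (eq_iff_iff.1 (hv j)).symm)
  calc ∫ v, rankWeight f w x v ∂(Measure.pi fun _ : ι => ν)
      = ∫ v, w (#{j | v j ∈ {y | f y < f x}} + 1) ∂(Measure.pi fun _ : ι => ν) :=
        integral_congr_ae (hnoTies.mono fun v hv => by
          simp only [rankWeight, hv, tieAverage_self_add_one, Set.mem_ofPred_eq])
    _ = _ := by
      rw [integral_comp_card_filter_mem_pi ν (measurableSet_lt hf measurable_const)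
          fun m => w (m + 1),
        ← Ico_add_one_right_eq_Icc, sum_Ico_eq_sum_range]
      simp [add_comm 1]

end RankWeight

lemma natCard_subtype_eq_ite_add_card_filter_succAbove {n : ℕ} (p : Fin (n + 1) → Prop)
    [DecidablePred p] (i : Fin (n + 1)) :
    Nat.card {j // p j} = (if p i then 1 else 0) + #{j : Fin n | p (i.succAbove j)} := by
  rw [Nat.card_eq_fintype_card, Fintype.card_subtype, card_filter, card_filter,
    Fin.sum_univ_succAbove _ i]

/-- Conditional expectation of the weight function: for i.i.d. candidate solutions
`X₁,…,X_λ` whose function values `f(Xᵢ)` have a continuous c.d.f. `F`, the weight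
`W(i) = ∑_{k=lᵢ+1}^{uᵢ} w_k/(uᵢ-lᵢ)` (with `lᵢ, uᵢ` the numbers of strictly resp.
weakly better solutions) satisfies
`E[W(i) | Xᵢ] = ∑_{k=1}^{λ} w_k C(λ-1,k-1) F(f(Xᵢ))^{k-1}(1-F(f(Xᵢ)))^{λ-k}` a.s. -/
theorem condexp_weight_function
    {Ω : Type*} [MeasurableSpace Ω] (μ : Measure Ω) [IsProbabilityMeasure μ]
    {E : Type*} [MeasurableSpace E]
    (lam : ℕ) (X : Fin lam → Ω → E)
    (hmeas : ∀ i, Measurable (X i))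
    (hindep : iIndepFun X μ)
    (ν : Measure E) (hlaw : ∀ i, μ.map (X i) = ν)
    (f : E → ℝ) (hf : Measurable f)
    (F : ℝ → ℝ) (hF : ∀ t, F t = (ν {y | f y ≤ t}).toReal) (hFc : Continuous F)
    (w : ℕ → ℝ) (W : Fin lam → Ω → ℝ)
    (hW : ∀ i ω, W i ω =
      (∑ k ∈ Finset.Ioc (Nat.card {j : Fin lam // f (X j ω) < f (X i ω)})
          (Nat.card {j : Fin lam // f (X j ω) ≤ f (X i ω)}), w k) /
        ((Nat.card {j : Fin lam // f (X j ω) ≤ f (X i ω)} : ℝ) -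
          (Nat.card {j : Fin lam // f (X j ω) < f (X i ω)} : ℝ))) :
    ∀ i : Fin lam,
      μ[W i | MeasurableSpace.comap (X i) inferInstance] =ᵐ[μ] fun ω =>
        ∑ k ∈ Finset.Icc 1 lam,
          w k * ((lam - 1).choose (k - 1) : ℝ) *
            F (f (X i ω)) ^ (k - 1) * (1 - F (f (X i ω))) ^ (lam - k) := by
  intro i
  obtain ⟨n, rfl⟩ : ∃ n, lam = n + 1 := ⟨lam - 1, by have := i.pos; omega⟩
  have : IsProbabilityMeasure ν :=
    hlaw i ▸ Measure.isProbabilityMeasure_map (hmeas i).aemeasurable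
  set V : Ω → Fin n → E := fun ω j => X (i.succAbove j) ω
  have hV : Measurable V := measurable_pi_lambda _ fun j => hmeas _
  have hWV : W i = fun ω => rankWeight f w (X i ω) (V ω) := by
    ext ω
    rw [hW, natCard_subtype_eq_ite_add_card_filter_succAbove _ i,
      natCard_subtype_eq_ite_add_card_filter_succAbove _ i]
    simp [rankWeight, tieAverage, add_comm, V]
  have hjoint : μ.map (fun ω => (X i ω, V ω)) = ν.prod (Measure.pi fun _ : Fin n => ν) := by
    have hsplit : (fun ω => (X i ω, V ω)) =
        MeasurableEquiv.piFinSuccAbove (fun _ => E) i ∘ fun ω j => X j ω := rfl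
    rw [hsplit, ← Measure.map_map (MeasurableEquiv.measurable _) (measurable_pi_lambda _ hmeas),
      hindep.map_fun_eq_pi_map fun j => (hmeas j).aemeasurable]
    simp_rw [hlaw]
    exact (measurePreserving_piFinSuccAbove (fun _ => ν) i).map_eq
  have hcdf : cdf (ν.map f) = F := by
    have := Measure.isProbabilityMeasure_map (μ := ν) hf.aemeasurable
    ext t
    rw [cdf_eq_real, map_measureReal_apply hf measurableSet_Iic, hF]
    rfl
  have hnoTies (x : E) : {y | f y < f x} =ᵐ[ν] {y | f y ≤ f x} :=
    ae_eq_setOf_lt_setOf_le_of_continuous_cdf hf (hcdf ▸ hFc) (f x)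
  have hint : Integrable (fun ω => rankWeight f w (X i ω) (V ω)) μ :=
    .of_bound ((measurable_rankWeight hf w).comp ((hmeas i).prodMk hV)).aestronglyMeasurable _
      (ae_of_all _ fun ω => abs_rankWeight_le f w (X i ω) (V ω))
  rw [hWV]
  filter_upwards [condExp_comp_prodMk_ae_eq_integral (hmeas i) hV hjoint
    (measurable_rankWeight hf w).stronglyMeasurable hint] with ω hω
  rw [hω, integral_rankWeight_pi ν hf w (hnoTies _), measureReal_congr (hnoTies _), hF,
    Fintype.card_fin, Nat.add_sub_cancel]
  rfl
end

section
/- For integers 0 < k < n, the binomial coefficient satisfies C(n,k) < (n / (2π k (n-k)))^{1/2} · (n/k)^k · (n/(n-k))^{n-k}. -/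
open Real

/-! With Mathlib's `stirlingSeq n = n! / (√(2n) (n/e)^n)` and `m = n - k`, the identity
`C(n,k) = √π · stirlingSeq n / (stirlingSeq k · stirlingSeq m) · B` is exact, `B` being the
right-hand side of the bound.
The Stirling sequence is strictly decreasing on positive integers (successive log-differences
are series of positive terms) with limit `√π`, so `stirlingSeq n < stirlingSeq k` and
`√π ≤ stirlingSeq m`: the prefactor is less than `1`. -/

open Nat Stirling

namespace Stirling

theorem stirlingSeq'_strictAnti : StrictAnti (stirlingSeq ∘ succ) :=
  strictAnti_nat_of_succ_lt fun n => by
    have hlog : 0 < log (stirlingSeq (n + 1)) - log (stirlingSeq (n + 2)) :=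
      (by positivity : (0 : ℝ) < _).trans_le
        (le_hasSum (log_stirlingSeq_sdiff_hasSum n) 0 fun _ _ => by positivity)
    exact (log_lt_log_iff (stirlingSeq'_pos _) (stirlingSeq'_pos _)).mp (sub_pos.mp hlog)

theorem stirlingSeq_lt_stirlingSeq {k n : ℕ} (hk : k ≠ 0) (hkn : k < n) :
    stirlingSeq n < stirlingSeq k := by
  obtain ⟨k, rfl⟩ := exists_eq_succ_of_ne_zero hk
  obtain ⟨n, rfl⟩ := exists_eq_succ_of_ne_zero (by omega : n ≠ 0)
  exact stirlingSeq'_strictAnti (succ_lt_succ_iff.mp hkn)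

theorem factorial_eq_stirlingSeq_mul {n : ℕ} (hn : n ≠ 0) :
    (n ! : ℝ) = stirlingSeq n * (√(2 * n) * (n / exp 1) ^ n) := by
  rw [stirlingSeq, div_mul_cancel₀]
  positivity

end Stirling

theorem div_pow_mul_div_pow {x y c : ℝ} (z : ℝ) (k m : ℕ) (hx : x ≠ 0) (hy : y ≠ 0) (hc : c ≠ 0) :
    (z / x) ^ k * (z / y) ^ m = (z / c) ^ (k + m) / ((x / c) ^ k * (y / c) ^ m) := by
  simp only [pow_add, div_pow]
  field_simp

theorem sqrt_pi_mul_sqrt_div_two_pi_mul_mul {x y : ℝ} (hx : 0 < x) (hy : 0 < y) :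
    √π * √((x + y) / (2 * π * x * y)) = √(2 * (x + y)) / (√(2 * x) * √(2 * y)) := by
  rw [← sqrt_mul (by positivity), ← sqrt_mul (by positivity), ← sqrt_div (by positivity)]
  congr 1
  field_simp

theorem choose_add_eq_stirlingSeq_div_mul {k m : ℕ} (hk : k ≠ 0) (hm : m ≠ 0) :
    ((k + m).choose k : ℝ) =
      √π * stirlingSeq (k + m) / (stirlingSeq m * stirlingSeq k) *
        (√((k + m : ℝ) / (2 * π * k * m)) * ((k + m : ℝ) / k) ^ k * ((k + m : ℝ) / m) ^ m) := by
  have hk' : (0 : ℝ) < k := by positivity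
  have hm' : (0 : ℝ) < m := by positivity
  rw [cast_choose ℝ (le_add_right k m), Nat.add_sub_cancel_left, factorial_eq_stirlingSeq_mul hk,
    factorial_eq_stirlingSeq_mul hm, factorial_eq_stirlingSeq_mul (by omega), cast_add,
    show ∀ a b c d e f : ℝ, a * b / c * (d * e * f) = a * d * (e * f) * b / c by intros; ring,
    sqrt_pi_mul_sqrt_div_two_pi_mul_mul hk' hm',
    div_pow_mul_div_pow _ k m hk'.ne' hm'.ne' (exp_pos 1).ne']
  field_simp

theorem choose_add_lt_sqrt_mul_pow_mul_pow {k m : ℕ} (hk : k ≠ 0) (hm : m ≠ 0) :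
    ((k + m).choose k : ℝ) <
      √((k + m : ℝ) / (2 * π * k * m)) * ((k + m : ℝ) / k) ^ k * ((k + m : ℝ) / m) ^ m := by
  have hsqrt_pi : 0 < √π := sqrt_pos.2 pi_pos
  have hratio : √π * stirlingSeq (k + m) < stirlingSeq m * stirlingSeq k :=
    mul_lt_mul_of_le_of_lt_of_pos_of_nonneg (sqrt_pi_le_stirlingSeq hm)
      (stirlingSeq_lt_stirlingSeq hk (by omega)) hsqrt_pi
      (hsqrt_pi.le.trans (sqrt_pi_le_stirlingSeq hk))
  have hdenom : 0 < stirlingSeq m * stirlingSeq k :=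
    mul_pos (hsqrt_pi.trans_le (sqrt_pi_le_stirlingSeq hm))
      (hsqrt_pi.trans_le (sqrt_pi_le_stirlingSeq hk))
  rw [choose_add_eq_stirlingSeq_div_mul hk hm]
  exact mul_lt_of_lt_one_left (by positivity) ((div_lt_one hdenom).2 hratio)

/-- Robbins-type bound on the binomial coefficient: for `0 < k < n`,
`C(n,k) < √(n / (2π k (n-k))) · (n/k)^k · (n/(n-k))^(n-k)`. -/
theorem binomial_robbins_bound (n k : ℕ) (hk : 0 < k) (hkn : k < n) :
    (n.choose k : ℝ) <
      Real.sqrt ((n : ℝ) / (2 * Real.pi * k * (n - k))) *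
        ((n : ℝ) / k) ^ k * ((n : ℝ) / (n - k)) ^ (n - k) := by
  obtain ⟨m, rfl⟩ := Nat.exists_eq_add_of_le hkn.le
  rw [Nat.add_sub_cancel_left, cast_add, add_sub_cancel_left]
  exact choose_add_lt_sqrt_mul_pow_mul_pow hk.ne' (by omega)
end
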